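/- Let a > 2, b = 2, and W(x) = ((x_n/ε)^{2/a} − x₁² − ... − x_{n−1}²)^{1/2} defined where the expression under the square root is positive and x_n > 0. Then W satisfies (1 + |∇W|²)·F[W] = W^{−3}·(x_n/ε)^{2/a}·[1 + ((2−a)/a²)·x_n^{2/a−2}·(1/ε)^{2/a}], where F[W] = ΔW − (W_i W_j W_{ij})/(1+|∇W|²) + n/W. -/

import Mathlib

/-- First partial derivative of `u` in the `i`-th coordinate direction. -/
noncomputable def pd {n : ℕ} (u : EuclideanSpace ℝ (Fin n) → ℝ) (i : Fin n)
    (x : EuclideanSpace ℝ (Fin n)) : ℝ :=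
  fderiv ℝ u x (EuclideanSpace.single i 1)

/-- Second partial derivative `u_{ij}`. -/
noncomputable def pd2 {n : ℕ} (u : EuclideanSpace ℝ (Fin n) → ℝ) (i j : Fin n)
    (x : EuclideanSpace ℝ (Fin n)) : ℝ :=
  fderiv ℝ (fun y => fderiv ℝ u y (EuclideanSpace.single j 1)) x (EuclideanSpace.single i 1)

/-- The hyperbolic minimal graph operator
`F[u] = Δu − Σ_{i,j} u_i u_j u_{ij}/(1+|∇u|²) + n/u`. -/
noncomputable def FHMG {n : ℕ} (u : EuclideanSpace ℝ (Fin n) → ℝ)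
    (x : EuclideanSpace ℝ (Fin n)) : ℝ :=
  (∑ i, pd2 u i i x)
    - (∑ i, ∑ j, pd u i x * pd u j x * pd2 u i j x) / (1 + ∑ i, (pd u i x) ^ 2)
    + n / u x

set_option maxHeartbeats 1000000

lemma hasDerivAt_div_rpow {ε : ℝ} (hε : 0 < ε) (p : ℝ) {t : ℝ} (ht : 0 < t) :
    HasDerivAt (fun s : ℝ => (s / ε) ^ p) (p * (t / ε) ^ (p - 1) / ε) t := by
  have h1 : HasDerivAt (fun s : ℝ => s / ε) (1 / ε) t := (hasDerivAt_id t).div_const ε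
  have h2 := Real.hasDerivAt_rpow_const (x := t / ε) (p := p) (Or.inl (div_pos ht hε).ne')
  have h3 := h2.comp t h1
  rw [show p * (t / ε) ^ (p - 1) / ε = p * (t / ε) ^ (p - 1) * (1 / ε) by ring]
  exact h3

lemma key_algebra (n : ℕ) (w B C s A : ℝ) (hw : 0 < w) (hA : A = w ^ 2 + s) (hs : 0 ≤ s) :
    (1 + (B ^ 2 + 4 * s) / (4 * w ^ 2)) *
      (((C - 2 * ((n : ℝ) - 1)) / (2 * w) - (B ^ 2 + 4 * s) / (4 * w ^ 3))
        - ((B ^ 2 * C - 8 * s) / (8 * w ^ 3) - (B ^ 2 + 4 * s) ^ 2 / (16 * w ^ 5))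
            / (1 + (B ^ 2 + 4 * s) / (4 * w ^ 2))
        + (n : ℝ) / w)
    = (w ^ 3)⁻¹ * A * (1 + C / 2) := by
  have hq : 1 + (B ^ 2 + 4 * s) / (4 * w ^ 2) ≠ 0 := by positivity
  have hw' : w ≠ 0 := hw.ne'
  subst hA
  field_simp
  ring

theorem supersolution_identity_a_gt_two
    {n : ℕ} (hn : 2 ≤ n) (a ε : ℝ) (ha : 2 < a) (hε : 0 < ε)
    (W : EuclideanSpace ℝ (Fin n) → ℝ)
    (hW : ∀ x : EuclideanSpace ℝ (Fin n),
      W x = Real.sqrt ((x ⟨n - 1, by omega⟩ / ε) ^ ((2 : ℝ) / a)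
        - ∑ i ∈ Finset.univ.erase (⟨n - 1, by omega⟩ : Fin n), (x i) ^ 2)) :
    ∀ x : EuclideanSpace ℝ (Fin n),
      0 < x ⟨n - 1, by omega⟩ →
      (∑ i ∈ Finset.univ.erase (⟨n - 1, by omega⟩ : Fin n), (x i) ^ 2)
          < (x ⟨n - 1, by omega⟩ / ε) ^ ((2 : ℝ) / a) →
      (1 + ∑ i, (pd W i x) ^ 2) * FHMG W x
        = (W x) ^ (-3 : ℝ) * (x ⟨n - 1, by omega⟩ / ε) ^ ((2 : ℝ) / a)
            * (1 + ((2 - a) / a ^ 2) * (x ⟨n - 1, by omega⟩) ^ ((2 : ℝ) / a - 2)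
                * (1 / ε) ^ ((2 : ℝ) / a)) := by
  intro x hx1' hx2'
  have ha0 : (0:ℝ) < a := by linarith
  set m : Fin n := ⟨n - 1, by omega⟩ with hm
  have hx1 : 0 < x m := hx1'
  set g : EuclideanSpace ℝ (Fin n) → ℝ :=
    fun y => (y m / ε) ^ ((2 : ℝ) / a) - ∑ i ∈ Finset.univ.erase m, (y i) ^ 2 with hgdef
  have hx2 : (∑ i ∈ Finset.univ.erase m, (x i) ^ 2) < (x m / ε) ^ ((2 : ℝ) / a) := hx2'
  have hWg : W = fun y => Real.sqrt (g y) := funext (fun y => hW y)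
  subst hWg
  set L : EuclideanSpace ℝ (Fin n) → (EuclideanSpace ℝ (Fin n) →L[ℝ] ℝ) :=
    fun y => ((2 / (a * ε)) * (y m / ε) ^ ((2 : ℝ) / a - 1)) • (EuclideanSpace.proj m : EuclideanSpace ℝ (Fin n) →L[ℝ] ℝ)
      - ∑ i ∈ Finset.univ.erase m, (2 * y i) • (EuclideanSpace.proj i : EuclideanSpace ℝ (Fin n) →L[ℝ] ℝ) with hLdef
  have hproj : ∀ (y : EuclideanSpace ℝ (Fin n)) (i : Fin n), HasFDerivAt (fun z : EuclideanSpace ℝ (Fin n) => z i)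
      (EuclideanSpace.proj i : EuclideanSpace ℝ (Fin n) →L[ℝ] ℝ) y :=
    fun y i => (EuclideanSpace.proj i : EuclideanSpace ℝ (Fin n) →L[ℝ] ℝ).hasFDerivAt
  -- differentiability of g
  have hg : ∀ y : EuclideanSpace ℝ (Fin n), 0 < y m → HasFDerivAt g (L y) y := by
    intro y hy
    have h1 : HasDerivAt (fun s : ℝ => (s / ε) ^ ((2:ℝ)/a))
        (((2:ℝ)/a) * (y m / ε) ^ ((2:ℝ)/a - 1) / ε) (y m) := hasDerivAt_div_rpow hε _ hy
    have h1' : HasFDerivAt (fun z : EuclideanSpace ℝ (Fin n) => (z m / ε) ^ ((2:ℝ)/a))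
        ((((2:ℝ)/a) * (y m / ε) ^ ((2:ℝ)/a - 1) / ε) • (EuclideanSpace.proj m : EuclideanSpace ℝ (Fin n) →L[ℝ] ℝ)) y :=
      by have := h1.comp_hasFDerivAt y (hproj y m); exact this
    have h2 : HasFDerivAt (fun z : EuclideanSpace ℝ (Fin n) => ∑ i ∈ Finset.univ.erase m, (z i) ^ 2)
        (∑ i ∈ Finset.univ.erase m, (2 * y i) • (EuclideanSpace.proj i : EuclideanSpace ℝ (Fin n) →L[ℝ] ℝ)) y := by
      apply HasFDerivAt.fun_sum
      intro i _
      have := (hasDerivAt_pow 2 (y i)).comp_hasFDerivAt y (hproj y i)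
      simpa [Function.comp_def] using this
    have h3 := h1'.sub h2
    have he : (((2:ℝ)/a) * (y m / ε) ^ ((2:ℝ)/a - 1) / ε) = (2 / (a * ε)) * (y m / ε) ^ ((2 : ℝ) / a - 1) := by
      field_simp
    rw [he] at h3
    exact h3
  -- applied values of L
  have hLapp : ∀ (y : EuclideanSpace ℝ (Fin n)) (j : Fin n),
      L y (EuclideanSpace.single j 1)
        = if j = m then (2 / (a * ε)) * (y m / ε) ^ ((2 : ℝ) / a - 1) else -2 * y j := by
    intro y j
    rw [hLdef]
    simp only [ContinuousLinearMap.sub_apply, ContinuousLinearMap.smul_apply,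
      ContinuousLinearMap.coe_sum', Finset.sum_apply, PiLp.proj_apply,
      EuclideanSpace.single_apply, smul_eq_mul, mul_ite, mul_one, mul_zero]
    rw [Finset.sum_ite_eq' (Finset.univ.erase m) j (fun i => 2 * y i)]
    by_cases hj : j = m
    · simp [hj]
    · simp [hj, Ne.symm hj, Finset.mem_erase]
  -- sqrt composition
  have hgx : 0 < g x := sub_pos.mpr hx2
  have hWd : ∀ y : EuclideanSpace ℝ (Fin n), 0 < y m → 0 < g y →
      HasFDerivAt (fun z => Real.sqrt (g z)) ((1 / (2 * Real.sqrt (g y))) • L y) y := by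
    intro y h1 h2
    exact (Real.hasDerivAt_sqrt h2.ne').comp_hasFDerivAt y (hg y h1)
  -- eventual domain membership
  have hU : ∀ᶠ y in nhds x, 0 < y m ∧ 0 < g y := by
    have c1 : ContinuousAt (fun y : EuclideanSpace ℝ (Fin n) => y m) x :=
      (EuclideanSpace.proj m (𝕜 := ℝ)).continuous.continuousAt
    have c2 : ContinuousAt (fun y : EuclideanSpace ℝ (Fin n) => y m / ε) x := c1.div_const ε
    have c3 : ContinuousAt (fun t : ℝ => t ^ ((2:ℝ)/a)) (x m / ε) :=
      Real.continuousAt_rpow_const _ _ (Or.inl (div_pos hx1 hε).ne')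
    have c4 : Continuous (fun y : EuclideanSpace ℝ (Fin n) => ∑ i ∈ Finset.univ.erase m, (y i) ^ 2) := by
      apply continuous_finset_sum
      intro i _
      exact ((EuclideanSpace.proj i (𝕜 := ℝ)).continuous).pow 2
    have hgc1 : ContinuousAt (fun y : EuclideanSpace ℝ (Fin n) => (y m / ε) ^ ((2:ℝ)/a)) x :=
      ContinuousAt.comp (f := fun y : EuclideanSpace ℝ (Fin n) => y m / ε) c3 c2
    have hgc : ContinuousAt g x := hgc1.sub c4.continuousAt
    have e1 : ∀ᶠ y in nhds x, 0 < y m := c1.eventually (eventually_gt_nhds hx1)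
    have e2 : ∀ᶠ y in nhds x, 0 < g y := hgc.eventually (eventually_gt_nhds hgx)
    exact e1.and e2
  -- point values
  set w : ℝ := Real.sqrt (g x) with hwdef
  have hw : 0 < w := Real.sqrt_pos.mpr hgx
  have hw2 : w ^ 2 = g x := Real.sq_sqrt hgx.le
  set B : ℝ := (2 / (a * ε)) * (x m / ε) ^ ((2 : ℝ) / a - 1) with hBdef
  set C : ℝ := (2 / (a * ε)) * (((2:ℝ)/a - 1) * (x m / ε) ^ ((2 : ℝ) / a - 2) / ε) with hCdef
  set D : Fin n → ℝ := fun j => if j = m then B else -2 * x j with hDdef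
  -- first derivatives
  have hpdW : ∀ (j : Fin n) (y : EuclideanSpace ℝ (Fin n)), 0 < y m → 0 < g y →
      fderiv ℝ (fun z => Real.sqrt (g z)) y (EuclideanSpace.single j 1)
        = (if j = m then (2 / (a * ε)) * (y m / ε) ^ ((2 : ℝ) / a - 1) else -2 * y j)
            / (2 * Real.sqrt (g y)) := by
    intro j y h1 h2
    rw [(hWd y h1 h2).fderiv]
    simp only [ContinuousLinearMap.smul_apply, smul_eq_mul]
    rw [hLapp, one_div_mul_eq_div]
  have hpdWx : ∀ j, pd (fun z => Real.sqrt (g z)) j x = D j / (2 * w) := by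
    intro j
    rw [pd, hpdW j x hx1 hgx, hDdef, hBdef, hwdef]
  -- second derivatives
  have hpd2 : ∀ i j : Fin n, pd2 (fun z => Real.sqrt (g z)) i j x
      = (if i = j then (if j = m then C else -2) else 0) / (2 * w)
          - D i * D j / (4 * w ^ 3) := by
    intro i j
    have hev : (fun y => fderiv ℝ (fun z => Real.sqrt (g z)) y (EuclideanSpace.single j 1))
        =ᶠ[nhds x] (fun y => (if j = m then (2 / (a * ε)) * (y m / ε) ^ ((2 : ℝ) / a - 1) else -2 * y j)
            / (2 * Real.sqrt (g y))) :=
      hU.mono (fun y hy => hpdW j y hy.1 hy.2)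
    rw [pd2, hev.fderiv_eq]
    have hden : HasFDerivAt (fun y => 2 * Real.sqrt (g y))
        ((2:ℝ) • ((1 / (2 * Real.sqrt (g x))) • L x)) x := (hWd x hx1 hgx).const_mul 2
    have h2w : (2 : ℝ) * Real.sqrt (g x) ≠ 0 := by positivity
    have hinv : HasFDerivAt (fun y => (2 * Real.sqrt (g y))⁻¹)
        ((-(((2 * Real.sqrt (g x)) ^ 2)⁻¹)) • ((2:ℝ) • ((1 / (2 * Real.sqrt (g x))) • L x))) x :=
      (hasDerivAt_inv h2w).comp_hasFDerivAt x hden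
    by_cases hj : j = m
    · subst hj
      simp only [eq_self_iff_true, ite_true]
      have h4 : HasDerivAt (fun t : ℝ => (t/ε) ^ ((2:ℝ)/a - 1))
          (((2:ℝ)/a - 1) * (x m/ε) ^ ((2:ℝ)/a - 1 - 1) / ε) (x m) := hasDerivAt_div_rpow hε _ hx1
      rw [show (2:ℝ)/a - 1 - 1 = (2:ℝ)/a - 2 by ring] at h4
      have h5 : HasFDerivAt (fun y : EuclideanSpace ℝ (Fin n) => (y m / ε) ^ ((2:ℝ)/a - 1))
          (((((2:ℝ)/a - 1) * (x m/ε) ^ ((2:ℝ)/a - 2) / ε)) • (EuclideanSpace.proj m : EuclideanSpace ℝ (Fin n) →L[ℝ] ℝ)) x :=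
        by have := h4.comp_hasFDerivAt x (hproj x m); exact this
      have hN := h5.const_mul (2/(a*ε))
      have hV : HasFDerivAt (fun y : EuclideanSpace ℝ (Fin n) =>
          (2 / (a * ε)) * (y m / ε) ^ ((2 : ℝ) / a - 1) / (2 * Real.sqrt (g y)))
          (((2 / (a * ε)) * (x m / ε) ^ ((2 : ℝ) / a - 1)) •
              ((-(((2 * Real.sqrt (g x)) ^ 2)⁻¹)) • ((2:ℝ) • ((1 / (2 * Real.sqrt (g x))) • L x)))
            + (2 * Real.sqrt (g x))⁻¹ •
              ((2/(a*ε)) • (((((2:ℝ)/a - 1) * (x m/ε) ^ ((2:ℝ)/a - 2) / ε)) • (EuclideanSpace.proj m : EuclideanSpace ℝ (Fin n) →L[ℝ] ℝ)))) x :=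
        hN.mul hinv
      rw [hV.fderiv]
      simp only [ContinuousLinearMap.add_apply, ContinuousLinearMap.smul_apply, smul_eq_mul,
        hLapp, PiLp.proj_apply, EuclideanSpace.single_apply, hDdef, hBdef, hCdef, hwdef]
      by_cases hi : i = m
      · simp only [hi, if_pos rfl, if_true]
        rw [← hwdef]
        field_simp
        ring
      · simp only [if_neg hi, if_neg (fun h => hi (h : i = m))]
        simp only [if_neg (fun h => hi ((h : m = i).symm)), if_true]
        rw [← hwdef]
        field_simp
        ring
    · simp only [if_neg hj]
      have hN : HasFDerivAt (fun y : EuclideanSpace ℝ (Fin n) => -2 * y j)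
          ((-2 : ℝ) • (EuclideanSpace.proj j : EuclideanSpace ℝ (Fin n) →L[ℝ] ℝ)) x :=
        (hproj x j).const_mul (-2)
      have hV : HasFDerivAt (fun y : EuclideanSpace ℝ (Fin n) => -2 * y j / (2 * Real.sqrt (g y)))
          ((-2 * x j) • ((-(((2 * Real.sqrt (g x)) ^ 2)⁻¹)) • ((2:ℝ) • ((1 / (2 * Real.sqrt (g x))) • L x)))
            + (2 * Real.sqrt (g x))⁻¹ • ((-2 : ℝ) • (EuclideanSpace.proj j : EuclideanSpace ℝ (Fin n) →L[ℝ] ℝ))) x :=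
        hN.mul hinv
      rw [hV.fderiv]
      simp only [ContinuousLinearMap.add_apply, ContinuousLinearMap.smul_apply, smul_eq_mul,
        hLapp, PiLp.proj_apply, EuclideanSpace.single_apply, hDdef, hBdef, hwdef]
      rw [← hwdef]
      by_cases hij : i = j
      · subst hij
        simp only [if_pos rfl, if_neg hj, if_true]
        field_simp
        ring_nf
      · simp only [if_neg hij, if_neg (fun h => hij ((h : j = i).symm)), if_neg hj]
        by_cases hi : i = m
        · simp only [hi, if_pos rfl, if_neg hj]
          field_simp
          ring
        · simp only [if_neg hi, if_neg hj]
          field_simp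
          ring
  -- sums
  set s : ℝ := ∑ i ∈ Finset.univ.erase m, (x i) ^ 2 with hsdef
  have hs0 : 0 ≤ s := Finset.sum_nonneg fun i _ => sq_nonneg _
  have hcard : (Finset.univ.erase m).card = n - 1 := by
    rw [Finset.card_erase_of_mem (Finset.mem_univ m), Finset.card_univ, Fintype.card_fin]
  have hD2 : ∑ i, D i ^ 2 = B ^ 2 + 4 * s := by
    rw [← Finset.add_sum_erase Finset.univ (fun i => D i ^ 2) (Finset.mem_univ m)]
    have h1 : ∀ i ∈ Finset.univ.erase m, D i ^ 2 = 4 * x i ^ 2 := fun i hi => by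
      simp only [hDdef, if_neg (Finset.mem_erase.mp hi).1]; ring
    rw [Finset.sum_congr rfl h1, ← Finset.mul_sum, ← hsdef]
    simp [hDdef]
  have hpdsum : ∑ i, (pd (fun z => Real.sqrt (g z)) i x) ^ 2 = (B ^ 2 + 4 * s) / (4 * w ^ 2) := by
    have h1 : ∀ i : Fin n, (D i / (2 * w)) ^ 2 = D i ^ 2 / (4 * w ^ 2) := fun i => by
      rw [div_pow]; norm_num [mul_pow]
    simp only [hpdWx, h1]
    rw [← Finset.sum_div, hD2]
  have hSum1 : ∑ i, pd2 (fun z => Real.sqrt (g z)) i i x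
      = (C - 2 * ((n : ℝ) - 1)) / (2 * w) - (B ^ 2 + 4 * s) / (4 * w ^ 3) := by
    simp only [hpd2, eq_self_iff_true, ite_true, ← pow_two]
    rw [Finset.sum_sub_distrib, ← Finset.sum_div, ← Finset.sum_div, hD2]
    congr 2
    rw [← Finset.add_sum_erase Finset.univ _ (Finset.mem_univ m)]
    have h1 : ∀ i ∈ Finset.univ.erase m, (if i = m then C else (-2:ℝ)) = -2 := fun i hi =>
      if_neg (Finset.mem_erase.mp hi).1
    rw [Finset.sum_congr rfl h1, Finset.sum_const, hcard, if_pos rfl, nsmul_eq_mul]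
    rw [Nat.cast_sub (by omega : 1 ≤ n)]
    push_cast
    ring
  have hterm : ∀ i j : Fin n, pd (fun z => Real.sqrt (g z)) i x * pd (fun z => Real.sqrt (g z)) j x
        * pd2 (fun z => Real.sqrt (g z)) i j x
      = (if j = i then D i ^ 2 * (if i = m then C else -2) / (8 * w ^ 3) else 0)
          - D i ^ 2 * D j ^ 2 / (16 * w ^ 5) := by
    intro i j
    rw [hpdWx, hpdWx, hpd2]
    by_cases hij : i = j
    · subst hij
      simp only [eq_self_iff_true, ite_true]
      by_cases him : i = m
      · simp only [him, eq_self_iff_true, ite_true]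
        field_simp
        ring
      · simp only [if_neg him]
        field_simp
        ring
    · simp only [if_neg hij, if_neg (fun h => hij ((h : j = i).symm))]
      field_simp
      ring
  have hDK : ∑ i, D i ^ 2 * (if i = m then C else -2) = B ^ 2 * C - 8 * s := by
    rw [← Finset.add_sum_erase Finset.univ _ (Finset.mem_univ m)]
    have h1 : ∀ i ∈ Finset.univ.erase m, D i ^ 2 * (if i = m then C else (-2:ℝ)) = -8 * x i ^ 2 :=
      fun i hi => by
        simp only [hDdef, if_neg (Finset.mem_erase.mp hi).1]; ring
    rw [Finset.sum_congr rfl h1]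
    have h2 : ∑ i ∈ Finset.univ.erase m, (-8 : ℝ) * x i ^ 2 = -8 * s := by
      rw [← Finset.mul_sum, ← hsdef]
    rw [h2]
    simp [hDdef]
    ring
  have hSum2 : ∑ i, ∑ j, pd (fun z => Real.sqrt (g z)) i x * pd (fun z => Real.sqrt (g z)) j x
        * pd2 (fun z => Real.sqrt (g z)) i j x
      = (B ^ 2 * C - 8 * s) / (8 * w ^ 3) - (B ^ 2 + 4 * s) ^ 2 / (16 * w ^ 5) := by
    have h2 : ∀ i : Fin n, ∑ j, (pd (fun z => Real.sqrt (g z)) i x * pd (fun z => Real.sqrt (g z)) j x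
          * pd2 (fun z => Real.sqrt (g z)) i j x)
        = D i ^ 2 * (if i = m then C else -2) / (8 * w ^ 3) - D i ^ 2 * (B ^ 2 + 4 * s) / (16 * w ^ 5) := by
      intro i
      rw [Finset.sum_congr rfl (fun j _ => hterm i j), Finset.sum_sub_distrib]
      congr 1
      · rw [Finset.sum_ite_eq' Finset.univ i
          (fun _ => D i ^ 2 * (if i = m then C else -2) / (8 * w ^ 3))]
        simp
      · have : ∀ j : Fin n, D i ^ 2 * D j ^ 2 / (16 * w ^ 5) = D i ^ 2 / (16 * w ^ 5) * D j ^ 2 :=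
          fun j => by ring
        simp only [this]
        rw [← Finset.mul_sum, hD2]
        ring
    rw [Finset.sum_congr rfl (fun i _ => h2 i), Finset.sum_sub_distrib, ← Finset.sum_div, hDK]
    congr 1
    have : ∀ i : Fin n, D i ^ 2 * (B ^ 2 + 4 * s) / (16 * w ^ 5) = (B ^ 2 + 4 * s) / (16 * w ^ 5) * D i ^ 2 :=
      fun i => by ring
    simp only [this]
    rw [← Finset.mul_sum, hD2]
    ring
  -- final assembly
  have hA : (x m / ε) ^ ((2:ℝ) / a) = w ^ 2 + s := by
    have h0 : g x = (x m / ε) ^ ((2:ℝ) / a) - s := rfl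
    rw [hw2, h0]; ring
  have hWx : (fun y => Real.sqrt (g y)) x = w := rfl
  have hw3 : w ^ (-3 : ℝ) = (w ^ 3)⁻¹ := by
    rw [Real.rpow_neg hw.le, show (3:ℝ) = ((3:ℕ):ℝ) by norm_num, Real.rpow_natCast]
  have hC2 : 1 + ((2 - a) / a ^ 2) * (x m) ^ ((2 : ℝ) / a - 2) * (1 / ε) ^ ((2 : ℝ) / a)
      = 1 + C / 2 := by
    have h1 : (x m / ε) ^ ((2:ℝ)/a - 2) = (x m) ^ ((2:ℝ)/a - 2) / ε ^ ((2:ℝ)/a - 2) :=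
      Real.div_rpow hx1.le hε.le _
    have h2 : ((1:ℝ) / ε) ^ ((2:ℝ)/a) = 1 / ε ^ ((2:ℝ)/a) := by
      rw [Real.div_rpow zero_le_one hε.le, Real.one_rpow]
    have h3 : ε ^ ((2:ℝ)/a - 2) * ε ^ ((2:ℕ):ℝ) = ε ^ ((2:ℝ)/a) := by
      rw [← Real.rpow_add hε]; norm_num
    rw [Real.rpow_natCast] at h3
    have hep1 : (0:ℝ) < ε ^ ((2:ℝ)/a - 2) := Real.rpow_pos_of_pos hε _
    have hep2 : (0:ℝ) < ε ^ ((2:ℝ)/a) := Real.rpow_pos_of_pos hε _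
    rw [hCdef, h1, h2]
    rw [← h3]
    field_simp
  rw [FHMG, hSum1, hSum2, hpdsum, hWx, hw3, hC2, hA]
  exact key_algebra n w B C s (w ^ 2 + s) hw rfl hs0
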